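/- For the automaton A, the shortest word w with q0 ∉ Q·w has length exactly 6: the word abbaba satisfies q0 ∉ Q·w, and every word of length strictly less than 6 has q0 in its image Q·w. -/

import Mathlib

/-! Q·(w x) = (Q·w)·x, so the images Q·w of words of length n are among the sets reached from Q
after n steps of the subset construction. Every set reached in fewer than six steps contains q0,
while abbaba leads Q → {q0,q1,q2} → {q0,q2,q3} → {q0,q1,q3} → {q0,q1} → {q0,q2} → {q1,q2}. -/

inductive St | q0 | q1 | q2 | q3
deriving DecidableEq

instance : Fintype St := ⟨{.q0, .q1, .q2, .q3}, fun x => by cases x <;> decide⟩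

inductive L | a | b
deriving DecidableEq

instance : Fintype L := ⟨{.a, .b}, fun x => by cases x <;> decide⟩

def step : St → L → St
  | .q0, .a => .q1
  | .q0, .b => .q0
  | .q1, .a => .q0
  | .q1, .b => .q2
  | .q2, .a => .q2
  | .q2, .b => .q3
  | .q3, .a => .q0
  | .q3, .b => .q1

def run (q : St) (w : List L) : St := w.foldl step q

open Finset

section SubsetConstruction

variable {σ α : Type*} [Fintype σ] [DecidableEq σ] (δ : σ → α → σ)

def imageAfter (w : List α) : Finset σ := univ.image fun q => w.foldl δ q

def reachableImages [Fintype α] : ℕ → Finset (Finset σ)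
  | 0 => {univ}
  | n + 1 => (reachableImages n).biUnion fun S => univ.image fun x => S.image (δ · x)

variable {δ}

theorem mem_imageAfter {w : List α} {q : σ} : q ∈ imageAfter δ w ↔ ∃ p, w.foldl δ p = q := by
  simp [imageAfter]

theorem imageAfter_append_singleton (w : List α) (x : α) :
    imageAfter δ (w ++ [x]) = (imageAfter δ w).image (δ · x) := by
  simp only [imageAfter, List.foldl_append, List.foldl_cons, List.foldl_nil, image_image]
  rfl

theorem imageAfter_mem_reachableImages [Fintype α] (w : List α) :
    imageAfter δ w ∈ reachableImages δ w.length := by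
  induction w using List.reverseRecOn with
  | nil => simp [imageAfter, reachableImages]
  | append_singleton w x ih =>
    rw [List.length_append, List.length_singleton, reachableImages, mem_biUnion]
    exact ⟨_, ih, mem_image.2 ⟨x, mem_univ _, (imageAfter_append_singleton w x).symm⟩⟩

end SubsetConstruction

theorem q0_mem_of_mem_reachableImages :
    ∀ n < 6, ∀ S ∈ reachableImages step n, St.q0 ∈ S := by
  decide

theorem stmt5 :
    (([L.a, .b, .b, .a, .b, .a] : List L).length = 6 ∧
      ¬ ∃ q : St, run q [.a, .b, .b, .a, .b, .a] = St.q0) ∧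
    ∀ w : List L, w.length < 6 → ∃ q : St, run q w = St.q0 := by
  refine ⟨⟨rfl, by decide⟩, fun w hw => ?_⟩
  exact mem_imageAfter.1 <|
    q0_mem_of_mem_reachableImages _ hw _ (imageAfter_mem_reachableImages w)
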